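/- Let f : ℝ → ℝ ∪ {+∞} be convex and lower semicontinuous with f(0) = 0, f(a) = +∞ for a < 0, and int(dom(f)) ≠ ∅. For δ > 0 define f_δ(a) = (δ/2)a² + ᵟf(a) − ᵟf(0) for a ≥ 0 and f_δ(a) = +∞ for a < 0, where ᵟf is the Moreau–Yosida regularization. Then f_δ is proper, lower semicontinuous, δ-convex (i.e. a ↦ f_δ(a) − (δ/2)a² is convex), satisfies f_δ(0) = 0, has dom(f_δ) = [0, ∞), and is differentiable on [0, ∞) with its distributional second derivative on (0, ∞) satisfying δ ≤ f_δ'' ≤ δ + δ⁻¹. -/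

import Mathlib

/-!
`ᵟf` is the infimal convolution of `f` (restricted to `[0, ∞)`) with the convex kernel
`|·|² / (2δ)`, hence convex, while `ᵟf(a) − a² / (2δ) = inf_{b ≥ 0} (f(b) + b² / (2δ) − ab / δ)`
is an infimum of affine functions, hence concave. A convex function `g` for which
`a² / (2δ) − g(a)` is also convex has equal one-sided derivatives everywhere, so `ᵟf` is
differentiable, and `f_δ` inherits every claimed property from `ᵟf` on `[0, ∞)`. That `ᵟf` is
finite comes from the bound `f(b) > −1 − K|b|`, which convexity and lower semicontinuity at `0`
give.
-/

open Filter Set Topology MeasureTheory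

noncomputable section
open scoped Classical

def EConvex (f : ℝ → EReal) : Prop :=
  ∀ x y t : ℝ, 0 ≤ t → t ≤ 1 →
    f (t * x + (1 - t) * y) ≤ (t : EReal) * f x + ((1 - t : ℝ) : EReal) * f y

def EProper (f : ℝ → EReal) : Prop := (∃ a, f a ≠ ⊤) ∧ ∀ a, f a ≠ ⊥

/-- Moreau–Yosida regularization with parameter `δ`:
`ᵟf(a) = inf_{b ≥ 0} ( f(b) + |a−b|² / (2δ) )`. -/
def moreau (δ : ℝ) (f : ℝ → EReal) (a : ℝ) : EReal :=
  ⨅ b : {b : ℝ // 0 ≤ b}, (f b.1 + (((a - b.1) ^ 2 / (2 * δ) : ℝ) : EReal))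

/-- The regularized internal energy density
`f_δ(a) = (δ/2)a² + ᵟf(a) − ᵟf(0)` for `a ≥ 0`, `+∞` otherwise. -/
def freg (δ : ℝ) (f : ℝ → EReal) (a : ℝ) : EReal :=
  if 0 ≤ a then ((δ / 2 * a ^ 2 : ℝ) : EReal) + moreau δ f a - moreau δ f 0 else ⊤

theorem ConvexOn.differentiableAt_of_convexOn_sub {g q : ℝ → ℝ} {x : ℝ}
    (hg : ConvexOn ℝ univ g) (hqg : ConvexOn ℝ univ (q - g)) (hq : DifferentiableAt ℝ q x) :
    DifferentiableAt ℝ g x := by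
  have hx : x ∈ interior (univ : Set ℝ) := by simp
  have hgr := hg.hasDerivWithinAt_rightDeriv_of_mem_interior hx
  have hgl := hg.hasDerivWithinAt_leftDeriv_of_mem_interior hx
  have hq_eq : g + (q - g) = q := by abel
  have hright := (uniqueDiffWithinAt_Ioi x).eq_deriv _ hq.hasDerivAt.hasDerivWithinAt
    (hq_eq ▸ hgr.add (hqg.hasDerivWithinAt_rightDeriv_of_mem_interior hx))
  have hleft := (uniqueDiffWithinAt_Iio x).eq_deriv _ hq.hasDerivAt.hasDerivWithinAt
    (hq_eq ▸ hgl.add (hqg.hasDerivWithinAt_leftDeriv_of_mem_interior hx))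
  -- the jumps `right - left` of the one-sided derivatives of `g` and `q - g` are `≥ 0`
  -- and sum to `0`
  have hjump_g := hg.leftDeriv_le_rightDeriv_of_mem_interior hx
  have hjump_qg := hqg.leftDeriv_le_rightDeriv_of_mem_interior hx
  have heq : derivWithin g (Iio x) x = derivWithin g (Ioi x) x := by linarith
  rw [heq, hasDerivWithinAt_Iio_iff_Iic] at hgl
  have := hgl.union (hasDerivWithinAt_Ioi_iff_Ici.mp hgr)
  rw [Iic_union_Ici, hasDerivWithinAt_univ] at this
  exact this.differentiableAt

section EReal

variable {F : ℝ → EReal} {g : ℝ → ℝ} {s : Set ℝ}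

theorem EConvex.of_convexOn (hg : ConvexOn ℝ s g) (hF : ∀ a ∈ s, F a = g a)
    (hF' : ∀ a ∉ s, F a = ⊤) : EConvex F := by
  have hmul_ne_bot : ∀ c : ℝ, 0 < c → ∀ a, (c : EReal) * F a ≠ ⊥ := by
    intro c hc a
    by_cases ha : a ∈ s
    · rw [hF a ha, ← EReal.coe_mul]; exact EReal.coe_ne_bot _
    · rw [hF' a ha, EReal.coe_mul_top_of_pos hc]; exact top_ne_bot
  intro x y t ht0 ht1
  rcases ht0.eq_or_lt with rfl | ht0
  · simp
  rcases ht1.eq_or_lt with rfl | ht1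
  · simp
  by_cases hx : x ∈ s
  · by_cases hy : y ∈ s
    · have hmem := hg.1 hx hy ht0.le (sub_nonneg.2 ht1.le) (add_sub_cancel t 1)
      have hle := hg.2 hx hy ht0.le (sub_nonneg.2 ht1.le) (add_sub_cancel t 1)
      simp only [smul_eq_mul] at hmem hle
      rw [hF _ hmem, hF x hx, hF y hy]
      exact_mod_cast hle
    · rw [hF' y hy, EReal.coe_mul_top_of_pos (sub_pos.2 ht1),
        EReal.add_top_of_ne_bot (hmul_ne_bot t ht0 x)]
      exact le_top
  · rw [hF' x hx, EReal.coe_mul_top_of_pos ht0,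
      EReal.top_add_of_ne_bot (hmul_ne_bot (1 - t) (sub_pos.2 ht1) y)]
    exact le_top

theorem lowerSemicontinuous_of_continuousOn (hs : IsClosed s) (hg : ContinuousOn g s)
    (hF : ∀ a ∈ s, F a = g a) (hF' : ∀ a ∉ s, F a = ⊤) : LowerSemicontinuous F := by
  rw [lowerSemicontinuous_iff_isClosed_preimage]
  intro y
  by_cases hy : y = ⊤
  · simp [hy]
  have hpre : F ⁻¹' Iic y = s ∩ g ⁻¹' {r : ℝ | (r : EReal) ≤ y} := by
    ext a
    by_cases ha : a ∈ s
    · simp [hF a ha, ha]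
    · simp [hF' a ha, ha, hy]
  rw [hpre]
  exact hg.preimage_isClosed_of_isClosed hs (isClosed_le continuous_coe_real_ereal continuous_const)

end EReal

namespace EConvex

variable {f : ℝ → EReal}

theorem apply_mul_le (hconv : EConvex f) (hf0 : f 0 = 0) {t : ℝ} (ht0 : 0 ≤ t) (ht1 : t ≤ 1)
    (b : ℝ) : f (t * b) ≤ t * f b := by
  simpa [hf0] using hconv b 0 t ht0 ht1

theorem exists_affine_lt (hconv : EConvex f) (hlsc : LowerSemicontinuousAt f 0) (hf0 : f 0 = 0) :
    ∃ K : ℝ, ∀ b, ((-1 - K * |b| : ℝ) : EReal) < f b := by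
  have h0 : ∀ᶠ x in 𝓝 0, ((-1 : ℝ) : EReal) < f x :=
    hlsc _ (show _ < f 0 by rw [hf0]; exact_mod_cast neg_one_lt_zero)
  obtain ⟨r, hr, hball⟩ := Metric.eventually_nhds_iff.mp h0
  obtain ⟨ρ, hρ, hρr⟩ := exists_between hr
  have hnear : ∀ b, |b| ≤ ρ → ((-1 : ℝ) : EReal) < f b := fun b hb =>
    hball (by rw [Real.dist_eq, sub_zero]; linarith)
  refine ⟨ρ⁻¹, fun b => ?_⟩
  rcases le_or_gt |b| ρ with hbρ | hρb
  · refine lt_of_le_of_lt ?_ (hnear b hbρ)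
    exact_mod_cast (by nlinarith [inv_pos.2 hρ, abs_nonneg b] : -1 - ρ⁻¹ * |b| ≤ -1)
  -- `f` is `> -1` at `t b` with `t = ρ / |b|`, and `f (t b) ≤ t f b`
  have hb : 0 < |b| := hρ.trans hρb
  have key : ((-1 : ℝ) : EReal) < ((ρ / |b| : ℝ) : EReal) * f b :=
    calc ((-1 : ℝ) : EReal) < f (ρ / |b| * b) := hnear _ (by
          rw [abs_mul, abs_div, abs_of_pos hρ, abs_abs, div_mul_cancel₀ _ hb.ne'])
      _ ≤ _ := hconv.apply_mul_le hf0 (by positivity) ((div_le_one hb).mpr hρb.le) b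
  generalize f b = y at key ⊢
  induction y using EReal.rec with
  | bot => simp [EReal.coe_mul_bot_of_pos (div_pos hρ hb)] at key
  | coe v =>
    rw [← EReal.coe_mul, EReal.coe_lt_coe_iff, div_mul_eq_mul_div, lt_div_iff₀ hb] at key
    have : -|b| * ρ⁻¹ < v := by
      rw [← div_eq_mul_inv, div_lt_iff₀ hρ]; linarith
    rw [EReal.coe_lt_coe_iff]
    linarith
  | top => exact EReal.coe_lt_top _

theorem ne_bot (hconv : EConvex f) (hlsc : LowerSemicontinuousAt f 0) (hf0 : f 0 = 0)
    (b : ℝ) : f b ≠ ⊥ := by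
  obtain ⟨K, hK⟩ := hconv.exists_affine_lt hlsc hf0
  exact (hK b).ne_bot

theorem convexOn_toReal (hconv : EConvex f) (hnb : ∀ x, f x ≠ ⊥) :
    ConvexOn ℝ {x | f x ≠ ⊤} (fun x => (f x).toReal) := by
  have key : ∀ x y t, f x ≠ ⊤ → f y ≠ ⊤ → 0 ≤ t → t ≤ 1 →
      f (t * x + (1 - t) * y) ≤ ((t * (f x).toReal + (1 - t) * (f y).toReal : ℝ) : EReal) := by
    intro x y t hx hy ht0 ht1
    push_cast
    rw [EReal.coe_toReal hx (hnb x), EReal.coe_toReal hy (hnb y)]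
    exact hconv x y t ht0 ht1
  refine ⟨fun x hx y hy a b ha hb hab => ?_, fun x hx y hy a b ha hb hab => ?_⟩ <;>
    obtain rfl : b = 1 - a := by linarith
  · exact ne_top_of_le_ne_top (EReal.coe_ne_top _) (key x y a hx hy ha (by linarith))
  · have := EReal.toReal_le_toReal (key x y a hx hy ha (by linarith)) (hnb _)
      (EReal.coe_ne_top _)
    rwa [EReal.toReal_coe] at this

end EConvex

section Moreau

variable {f : ℝ → EReal} {δ : ℝ}

theorem moreau_le (a : ℝ) {b : ℝ} (hb : 0 ≤ b) :
    moreau δ f a ≤ f b + (((a - b) ^ 2 / (2 * δ) : ℝ) : EReal) :=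
  iInf_le (fun b : {b : ℝ // 0 ≤ b} => f b.1 + (((a - b.1) ^ 2 / (2 * δ) : ℝ) : EReal)) ⟨b, hb⟩

theorem moreau_le_sq_div (hf0 : f 0 = 0) (a : ℝ) :
    moreau δ f a ≤ ((a ^ 2 / (2 * δ) : ℝ) : EReal) := by
  simpa [hf0] using moreau_le (f := f) (δ := δ) a le_rfl

theorem le_moreau (hδ : 0 < δ) {K : ℝ} (hK : ∀ b, 0 ≤ b → ((-1 - K * b : ℝ) : EReal) ≤ f b)
    (a : ℝ) : ((-1 - K * a - K ^ 2 * δ / 2 : ℝ) : EReal) ≤ moreau δ f a := by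
  refine le_iInf fun ⟨b, hb⟩ => ?_
  have hsq : (a - b) ^ 2 / (2 * δ) + K * (a - b) + K ^ 2 * δ / 2
      = (a - b + K * δ) ^ 2 / (2 * δ) := by
    field_simp
    ring
  calc ((-1 - K * a - K ^ 2 * δ / 2 : ℝ) : EReal)
      ≤ ((-1 - K * b : ℝ) : EReal) + (((a - b) ^ 2 / (2 * δ) : ℝ) : EReal) := by
        rw [← EReal.coe_add, EReal.coe_le_coe_iff]
        linarith [div_nonneg (sq_nonneg (a - b + K * δ)) (by positivity : (0 : ℝ) ≤ 2 * δ)]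
    _ ≤ f b + (((a - b) ^ 2 / (2 * δ) : ℝ) : EReal) := by gcongr; exact hK b hb

theorem EConvex.coe_toReal_moreau (hconv : EConvex f) (hlsc : LowerSemicontinuousAt f 0)
    (hf0 : f 0 = 0) (hδ : 0 < δ) (a : ℝ) : ((moreau δ f a).toReal : EReal) = moreau δ f a := by
  obtain ⟨K, hK⟩ := hconv.exists_affine_lt hlsc hf0
  exact EReal.coe_toReal (ne_top_of_le_ne_top (EReal.coe_ne_top _) (moreau_le_sq_div hf0 a))
    (ne_bot_of_le_ne_bot (EReal.coe_ne_bot _)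
      (le_moreau hδ (fun b hb => (abs_of_nonneg hb ▸ hK b).le) a))

variable {M : ℝ → ℝ}

theorem le_toReal_add_of_moreau_eq (hM : ∀ a, moreau δ f a = M a) (a : ℝ) {b : ℝ} (hb : 0 ≤ b)
    (hfb : f b ≠ ⊤) (hfb' : f b ≠ ⊥) : M a ≤ (f b).toReal + (a - b) ^ 2 / (2 * δ) := by
  have := moreau_le (δ := δ) (f := f) a hb
  rwa [hM, ← EReal.coe_toReal hfb hfb', ← EReal.coe_add, EReal.coe_le_coe_iff] at this

theorem exists_toReal_add_lt_of_moreau_eq (hM : ∀ a, moreau δ f a = M a) (hnb : ∀ b, f b ≠ ⊥)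
    (a : ℝ) {ε : ℝ} (hε : 0 < ε) :
    ∃ b, 0 ≤ b ∧ f b ≠ ⊤ ∧ (f b).toReal + (a - b) ^ 2 / (2 * δ) < M a + ε := by
  have hlt : moreau δ f a < ((M a + ε : ℝ) : EReal) := by
    rw [hM]; exact_mod_cast lt_add_of_pos_right _ hε
  obtain ⟨⟨b, hb⟩, hlt⟩ := iInf_lt_iff.mp hlt
  have hfb : f b ≠ ⊤ := by
    rintro h
    simp [h] at hlt
  refine ⟨b, hb, hfb, ?_⟩
  rwa [← EReal.coe_toReal hfb (hnb b), ← EReal.coe_add, EReal.coe_lt_coe_iff] at hlt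

theorem convexOn_of_moreau_eq (hδ : 0 ≤ δ) (hconv : EConvex f) (hnb : ∀ b, f b ≠ ⊥)
    (hM : ∀ a, moreau δ f a = M a) : ConvexOn ℝ univ M := by
  have hφ := hconv.convexOn_toReal hnb
  refine ⟨convex_univ, fun x _ y _ s t hs ht hst => ?_⟩
  simp only [smul_eq_mul]
  refine le_of_forall_pos_le_add fun ε hε => ?_
  obtain ⟨b₁, hb₁, hfb₁, h₁⟩ := exists_toReal_add_lt_of_moreau_eq hM hnb x hε
  obtain ⟨b₂, hb₂, hfb₂, h₂⟩ := exists_toReal_add_lt_of_moreau_eq hM hnb y hε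
  have hfb : f (s * b₁ + t * b₂) ≠ ⊤ := hφ.1 hfb₁ hfb₂ hs ht hst
  have hφb : (f (s * b₁ + t * b₂)).toReal ≤ s * (f b₁).toReal + t * (f b₂).toReal :=
    hφ.2 hfb₁ hfb₂ hs ht hst
  have hsq : (s * x + t * y - (s * b₁ + t * b₂)) ^ 2 / (2 * δ)
      ≤ s * ((x - b₁) ^ 2 / (2 * δ)) + t * ((y - b₂) ^ 2 / (2 * δ)) := by
    have := (even_two.convexOn_pow (𝕜 := ℝ)).2 (mem_univ (x - b₁)) (mem_univ (y - b₂)) hs ht hst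
    simp only [smul_eq_mul] at this
    rw [mul_div_assoc', mul_div_assoc', ← add_div]
    gcongr
    convert this using 2
    ring
  have hMz := le_toReal_add_of_moreau_eq hM (s * x + t * y)
    (add_nonneg (mul_nonneg hs hb₁) (mul_nonneg ht hb₂)) hfb (hnb _)
  nlinarith [mul_le_mul_of_nonneg_left h₁.le hs, mul_le_mul_of_nonneg_left h₂.le ht]

theorem concaveOn_sub_sq_div_of_moreau_eq (hnb : ∀ b, f b ≠ ⊥) (hM : ∀ a, moreau δ f a = M a) :
    ConcaveOn ℝ univ (fun a => M a - a ^ 2 / (2 * δ)) := by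
  refine ⟨convex_univ, fun x _ y _ s t hs ht hst => ?_⟩
  simp only [smul_eq_mul]
  refine le_of_forall_pos_le_add fun ε hε => ?_
  obtain ⟨b, hb, hfb, h⟩ := exists_toReal_add_lt_of_moreau_eq hM hnb (s * x + t * y) hε
  have hx := le_toReal_add_of_moreau_eq hM x hb hfb (hnb b)
  have hy := le_toReal_add_of_moreau_eq hM y hb hfb (hnb b)
  -- `a ↦ (a - b)² / (2δ) - a² / (2δ)` is affine
  have haff : s * ((x - b) ^ 2 / (2 * δ) - x ^ 2 / (2 * δ))
      + t * ((y - b) ^ 2 / (2 * δ) - y ^ 2 / (2 * δ))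
      = (s * x + t * y - b) ^ 2 / (2 * δ) - (s * x + t * y) ^ 2 / (2 * δ) := by
    obtain rfl : t = 1 - s := by linarith
    ring
  have hφ : s * (f b).toReal + t * (f b).toReal = (f b).toReal := by
    rw [← add_mul, hst, one_mul]
  nlinarith [mul_le_mul_of_nonneg_left hx hs, mul_le_mul_of_nonneg_left hy ht]

theorem differentiable_of_moreau_eq (hδ : 0 ≤ δ) (hconv : EConvex f) (hnb : ∀ b, f b ≠ ⊥)
    (hM : ∀ a, moreau δ f a = M a) : Differentiable ℝ M := fun _ =>
  (convexOn_of_moreau_eq hδ hconv hnb hM).differentiableAt_of_convexOn_sub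
    (q := fun a => a ^ 2 / (2 * δ))
    ((concaveOn_sub_sq_div_of_moreau_eq hnb hM).neg.congr fun a _ => by simp) (by fun_prop)

end Moreau

section freg

variable {f : ℝ → EReal} {δ : ℝ} {M : ℝ → ℝ}

theorem freg_of_nonneg (hM : ∀ a, moreau δ f a = M a) {a : ℝ} (ha : 0 ≤ a) :
    freg δ f a = ((δ / 2 * a ^ 2 + M a - M 0 : ℝ) : EReal) := by
  rw [freg, if_pos ha, hM, hM]
  push_cast
  rfl

theorem freg_of_neg {a : ℝ} (ha : a < 0) : freg δ f a = ⊤ :=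
  if_neg ha.not_ge

theorem toReal_freg_of_nonneg (hM : ∀ a, moreau δ f a = M a) {a : ℝ} (ha : 0 ≤ a) :
    (freg δ f a).toReal = δ / 2 * a ^ 2 + M a - M 0 := by
  rw [freg_of_nonneg hM ha, EReal.toReal_coe]

theorem freg_ne_top_iff (hM : ∀ a, moreau δ f a = M a) (a : ℝ) : freg δ f a ≠ ⊤ ↔ 0 ≤ a := by
  refine ⟨fun h => ?_, fun h => by rw [freg_of_nonneg hM h]; exact EReal.coe_ne_top _⟩
  by_contra ha
  exact h (freg_of_neg (not_le.1 ha))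

theorem freg_zero (hM : ∀ a, moreau δ f a = M a) : freg δ f 0 = 0 := by
  rw [freg_of_nonneg hM le_rfl]
  norm_num

theorem eProper_freg (hM : ∀ a, moreau δ f a = M a) : EProper (freg δ f) := by
  refine ⟨⟨0, (freg_ne_top_iff hM 0).2 le_rfl⟩, fun a => ?_⟩
  rcases le_or_gt 0 a with ha | ha
  · rw [freg_of_nonneg hM ha]; exact EReal.coe_ne_bot _
  · rw [freg_of_neg ha]; exact top_ne_bot

theorem lowerSemicontinuous_freg (hM : ∀ a, moreau δ f a = M a) (hMc : Continuous M) :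
    LowerSemicontinuous (freg δ f) :=
  lowerSemicontinuous_of_continuousOn isClosed_Ici (by fun_prop)
    (fun _ ha => freg_of_nonneg hM ha) (fun _ ha => freg_of_neg (not_le.1 ha))

theorem eConvex_freg_sub_sq (hM : ∀ a, moreau δ f a = M a) (hMc : ConvexOn ℝ (Ici 0) M) :
    EConvex (fun a => freg δ f a - ((δ / 2 * a ^ 2 : ℝ) : EReal)) := by
  refine EConvex.of_convexOn (hMc.add_const (-M 0)) (fun a ha => ?_)
    (fun a ha => by rw [freg_of_neg (not_le.1 ha), EReal.top_sub_coe])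
  rw [freg_of_nonneg hM ha, ← EReal.coe_sub, Pi.add_apply]
  congr 1
  ring

theorem differentiableWithinAt_toReal_freg (hM : ∀ a, moreau δ f a = M a)
    (hMd : Differentiable ℝ M) {a : ℝ} (ha : 0 ≤ a) :
    DifferentiableWithinAt ℝ (fun x => (freg δ f x).toReal) (Ici 0) a := by
  have hd : Differentiable ℝ (fun x => δ / 2 * x ^ 2 + M x - M 0) := by fun_prop
  exact (hd a).differentiableWithinAt.congr (fun _ hx => toReal_freg_of_nonneg hM hx)
    (toReal_freg_of_nonneg hM ha)

theorem convexOn_toReal_freg_sub_sq (hM : ∀ a, moreau δ f a = M a) (hMc : ConvexOn ℝ (Ioi 0) M) :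
    ConvexOn ℝ (Ioi 0) (fun a => (freg δ f a).toReal - δ / 2 * a ^ 2) :=
  (hMc.add_const (-M 0)).congr fun a ha => by
    rw [toReal_freg_of_nonneg hM (le_of_lt ha), Pi.add_apply]
    ring

theorem concaveOn_toReal_freg_sub_sq (hδ : δ ≠ 0) (hM : ∀ a, moreau δ f a = M a)
    (hMc : ConcaveOn ℝ (Ioi 0) (fun a => M a - a ^ 2 / (2 * δ))) :
    ConcaveOn ℝ (Ioi 0) (fun a => (freg δ f a).toReal - (δ + δ⁻¹) / 2 * a ^ 2) :=
  (hMc.add_const (-M 0)).congr fun a ha => by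
    rw [toReal_freg_of_nonneg hM (le_of_lt ha), Pi.add_apply]
    field_simp
    ring

end freg

-- The bound `δ ≤ f_δ'' ≤ δ + δ⁻¹` on `(0, ∞)` is encoded as `δ`-convexity together with
-- `(δ + δ⁻¹)`-concavity.
theorem statement2_general (f : ℝ → EReal) (hconv : EConvex f)
    (hlsc : LowerSemicontinuous f) (hf0 : f 0 = 0)
    (δ : ℝ) (hδ : 0 < δ) :
    EProper (freg δ f) ∧
    LowerSemicontinuous (freg δ f) ∧
    EConvex (fun a => freg δ f a - ((δ / 2 * a ^ 2 : ℝ) : EReal)) ∧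
    freg δ f 0 = 0 ∧
    (∀ a : ℝ, freg δ f a ≠ ⊤ ↔ 0 ≤ a) ∧
    (∀ a ∈ Set.Ici (0 : ℝ),
      DifferentiableWithinAt ℝ (fun x => (freg δ f x).toReal) (Set.Ici 0) a) ∧
    ConvexOn ℝ (Set.Ioi 0) (fun a => (freg δ f a).toReal - δ / 2 * a ^ 2) ∧
    ConcaveOn ℝ (Set.Ioi 0)
      (fun a => (freg δ f a).toReal - (δ + δ⁻¹) / 2 * a ^ 2) := by
  have hnb := hconv.ne_bot (hlsc 0) hf0
  set M : ℝ → ℝ := fun a => (moreau δ f a).toReal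
  have hM : ∀ a, moreau δ f a = M a := fun a =>
    (hconv.coe_toReal_moreau (hlsc 0) hf0 hδ a).symm
  have hMconv := convexOn_of_moreau_eq hδ.le hconv hnb hM
  have hMdiff := differentiable_of_moreau_eq hδ.le hconv hnb hM
  exact ⟨eProper_freg hM, lowerSemicontinuous_freg hM hMdiff.continuous,
    eConvex_freg_sub_sq hM (hMconv.subset (subset_univ _) (convex_Ici 0)), freg_zero hM,
    freg_ne_top_iff hM, fun _ ha => differentiableWithinAt_toReal_freg hM hMdiff ha,
    convexOn_toReal_freg_sub_sq hM (hMconv.subset (subset_univ _) (convex_Ioi 0)),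
    concaveOn_toReal_freg_sub_sq hδ.ne' hM
      ((concaveOn_sub_sq_div_of_moreau_eq hnb hM).subset (subset_univ _) (convex_Ioi 0))⟩

/-- Properties of the regularized energy density `f_δ`: it is proper, lower
semicontinuous, `δ`-convex, vanishes at `0`, has domain `[0, ∞)`, is
differentiable on `[0, ∞)`, and its distributional second derivative on `(0, ∞)`
lies between `δ` and `δ + δ⁻¹` (encoded as `δ`-convexity together with
`(δ + δ⁻¹)`-concavity on `(0, ∞)`). -/
theorem statement2 (f : ℝ → EReal) (hconv : EConvex f)
    (hlsc : LowerSemicontinuous f) (hf0 : f 0 = 0)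
    (hneg : ∀ a : ℝ, a < 0 → f a = ⊤)
    (hdom : (interior {a : ℝ | f a ≠ ⊤}).Nonempty)
    (δ : ℝ) (hδ : 0 < δ) :
    EProper (freg δ f) ∧
    LowerSemicontinuous (freg δ f) ∧
    EConvex (fun a => freg δ f a - ((δ / 2 * a ^ 2 : ℝ) : EReal)) ∧
    freg δ f 0 = 0 ∧
    (∀ a : ℝ, freg δ f a ≠ ⊤ ↔ 0 ≤ a) ∧
    (∀ a ∈ Set.Ici (0 : ℝ),
      DifferentiableWithinAt ℝ (fun x => (freg δ f x).toReal) (Set.Ici 0) a) ∧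
    ConvexOn ℝ (Set.Ioi 0) (fun a => (freg δ f a).toReal - δ / 2 * a ^ 2) ∧
    ConcaveOn ℝ (Set.Ioi 0)
      (fun a => (freg δ f a).toReal - (δ + δ⁻¹) / 2 * a ^ 2) :=
  statement2_general f hconv hlsc hf0 δ hδ
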